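/- Let κ : [0,1] → (0,∞) be continuous and integrable, γ > 0, M̄ ≥ 1, B(0) ∈ ℝ with M̄·B(0) + 1 < 0, and suppose (B, A, Σ) solve the coupled system B'(t) = 2κ(t)(M̄B(t)+1)/(γ(A(t)+M̄+1)), A'(t) = -(B'(t))²Σ(t)(A(t)+1) with A(0) ∈ (-1,0], Σ'(t) = -(B'(t))²Σ(t)² with Σ(0) ≥ 0, on [0,1]. Then B(t) < 0 and B'(t) < 0 for all t ∈ [0,1]. -/

import Mathlib

/-!
Where `A > -1` the denominator `γ (A + M̄ + 1)` is at least `γ M̄`, so there `B'`, and with it the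
coefficient `-(B')² Σ` of the linear equation `(A + 1)' = -(B')² Σ (A + 1)`, is bounded. A linear
equation whose coefficient is bounded wherever the solution is positive preserves positivity, so
`A > -1` on `[0, 1]`. Then `M̄ B + 1` solves a linear equation with continuous coefficient
`2 κ M̄ / (γ (A + M̄ + 1))` and stays negative, which gives the signs of `B` and `B'`.
-/

open Set Real

theorem pos_of_hasDerivWithinAt_mul_self {y c : ℝ → ℝ} {a b K : ℝ}
    (hy : ContinuousOn y (Icc a b))
    (hy' : ∀ t ∈ Ico a b, HasDerivWithinAt y (c t * y t) (Ici t) t)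
    (hc : ∀ t ∈ Ico a b, 0 < y t → |c t| ≤ K) (ha : 0 < y a) :
    ∀ t ∈ Icc a b, 0 < y t := by
  -- `y` stays above the barrier `L`, which it can only touch where `y > 0`; there `|c| ≤ K`
  -- makes `y` decay more slowly than `L`.
  set L : ℝ → ℝ := fun t => y a * exp (-(K + 1) * (t - a))
  have hL : ∀ t, HasDerivAt L (-(K + 1) * L t) t := fun t => by
    have h := ((hasDerivAt_id t).sub_const a).const_mul (-(K + 1))
    exact (h.exp.const_mul (y a)).congr_deriv (by simp only [L, id]; ring)
  have hL_pos : ∀ t, 0 < L t := fun t => by positivity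
  have hLy : ∀ t ∈ Icc a b, L t ≤ y t :=
    image_le_of_deriv_right_lt_deriv_boundary' (fun t _ => (hL t).continuousAt.continuousWithinAt)
      (fun t _ => (hL t).hasDerivWithinAt) (by simp [L]) hy hy' fun t ht hLt => by
        have hct := abs_le.mp (hc t ht (hLt ▸ hL_pos t))
        rw [← hLt]
        nlinarith [hL_pos t]
  exact fun t ht => (hL_pos t).trans_le (hLy t ht)

namespace PriceImpact

variable {κ B A Sg : ℝ → ℝ} {γ M : ℝ}

theorem neg_one_lt (hγ : 0 < γ) (hM : 0 < M) (hκ : ContinuousOn κ (Icc 0 1))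
    (hSg : ContinuousOn Sg (Icc 0 1)) (hA0 : -1 < A 0)
    (hB : ∀ t ∈ Icc (0:ℝ) 1, HasDerivAt B (2 * κ t * (M * B t + 1) / (γ * (A t + M + 1))) t)
    (hA : ∀ t ∈ Icc (0:ℝ) 1, HasDerivAt A (-(deriv B t) ^ 2 * Sg t * (A t + 1)) t) :
    ∀ t ∈ Icc (0:ℝ) 1, -1 < A t := by
  set g : ℝ → ℝ := fun t => 2 * κ t * (M * B t + 1) / (γ * M)
  have hB_cont : ContinuousOn B (Icc 0 1) := fun t ht => (hB t ht).continuousAt.continuousWithinAt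
  obtain ⟨K, hK⟩ := isCompact_Icc.exists_bound_of_continuousOn (f := fun t => g t ^ 2 * Sg t)
    (by fun_prop)
  have hderiv : ∀ t ∈ Icc (0:ℝ) 1, 0 < A t + 1 → |deriv B t| ≤ |g t| := fun t ht hAt => by
    have hden : γ * M ≤ γ * (A t + M + 1) := by nlinarith
    rw [(hB t ht).deriv, abs_div, abs_div, abs_of_pos (by positivity : 0 < γ * M),
      abs_of_pos (by nlinarith : 0 < γ * (A t + M + 1))]
    exact div_le_div_of_nonneg_left (abs_nonneg _) (by positivity) hden
  have hpos := pos_of_hasDerivWithinAt_mul_self (y := fun t => A t + 1)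
    (c := fun t => -(deriv B t) ^ 2 * Sg t) (K := K)
    (fun t ht => ((hA t ht).continuousAt.add continuousAt_const).continuousWithinAt)
    (fun t ht => ((hA t (Ico_subset_Icc_self ht)).add_const 1).hasDerivWithinAt)
    (fun t ht hAt => by
      have hsq := sq_le_sq.2 (hderiv t (Ico_subset_Icc_self ht) hAt)
      calc |-(deriv B t) ^ 2 * Sg t| = deriv B t ^ 2 * |Sg t| := by
            rw [abs_mul, abs_neg, abs_of_nonneg (sq_nonneg _)]
        _ ≤ g t ^ 2 * |Sg t| := by gcongr
        _ ≤ K := by simpa [abs_mul] using hK t (Ico_subset_Icc_self ht))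
    (by linarith)
  exact fun t ht => by linarith [hpos t ht]

theorem mul_add_one_neg (hγ : 0 < γ) (hM : 0 < M) (hκ : ContinuousOn κ (Icc 0 1))
    (hA_cont : ContinuousOn A (Icc 0 1)) (hA_gt : ∀ t ∈ Icc (0:ℝ) 1, -1 < A t)
    (hB0 : M * B 0 + 1 < 0)
    (hB : ∀ t ∈ Icc (0:ℝ) 1, HasDerivAt B (2 * κ t * (M * B t + 1) / (γ * (A t + M + 1))) t) :
    ∀ t ∈ Icc (0:ℝ) 1, M * B t + 1 < 0 := by
  set c : ℝ → ℝ := fun t => 2 * κ t * M / (γ * (A t + M + 1))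
  have hden : ∀ t ∈ Icc (0:ℝ) 1, 0 < γ * (A t + M + 1) := fun t ht => by
    nlinarith [hA_gt t ht]
  obtain ⟨K, hK⟩ := isCompact_Icc.exists_bound_of_continuousOn (f := c)
    (ContinuousOn.div (by fun_prop) (by fun_prop) fun t ht => (hden t ht).ne')
  have hpos := pos_of_hasDerivWithinAt_mul_self (y := fun t => -(M * B t + 1)) (c := c) (K := K)
    (fun t ht => (((hB t ht).continuousAt.const_mul M).add_const 1).neg.continuousWithinAt)
    (fun t ht => by
      refine ((((hB t (Ico_subset_Icc_self ht)).const_mul M).add_const 1).neg.hasDerivWithinAt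
        ).congr_deriv ?_
      simp only [c]; ring)
    (fun t ht _ => by simpa using hK t (Ico_subset_Icc_self ht))
    (by linarith)
  exact fun t ht => by linarith [hpos t ht]

end PriceImpact

theorem stmt6_general (κ B A Sg : ℝ → ℝ) (γ : ℝ) (hγ : 0 < γ) (Mb : ℕ)
    (hκ : ContinuousOn κ (Icc (0:ℝ) 1)) (hκpos : ∀ t ∈ Icc (0:ℝ) 1, 0 < κ t)
    (hB0 : (Mb : ℝ) * B 0 + 1 < 0)
    (hA0 : A 0 ∈ Ioc (-1 : ℝ) 0)
    (hB : ∀ t ∈ Icc (0:ℝ) 1,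
      HasDerivAt B (2 * κ t * ((Mb : ℝ) * B t + 1) / (γ * (A t + (Mb : ℝ) + 1))) t)
    (hA : ∀ t ∈ Icc (0:ℝ) 1,
      HasDerivAt A (-(deriv B t) ^ 2 * Sg t * (A t + 1)) t)
    (hSg : ∀ t ∈ Icc (0:ℝ) 1,
      HasDerivAt Sg (-(deriv B t) ^ 2 * (Sg t) ^ 2) t) :
    ∀ t ∈ Icc (0:ℝ) 1, B t < 0 ∧ deriv B t < 0 := by
  have hM : (0:ℝ) < Mb := Nat.cast_pos.2 <| Nat.pos_of_ne_zero <| by rintro rfl; norm_num at hB0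
  have hA_gt := PriceImpact.neg_one_lt hγ hM hκ
    (fun t ht => (hSg t ht).continuousAt.continuousWithinAt) hA0.1 hB hA
  have hf := PriceImpact.mul_add_one_neg hγ hM hκ
    (fun t ht => (hA t ht).continuousAt.continuousWithinAt) hA_gt hB0 hB
  intro t ht
  refine ⟨neg_of_mul_neg_right (by linarith [hf t ht]) hM.le, ?_⟩
  rw [(hB t ht).deriv]
  exact div_neg_of_neg_of_pos (mul_neg_of_pos_of_neg (by linarith [hκpos t ht]) (hf t ht))
    (by nlinarith [hA_gt t ht])

/-- With `κ` continuous positive on `[0,1]`, `γ > 0`, `M̄ ≥ 1`,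
`M̄·B(0)+1 < 0`, and `(B,A,Σ)` solving the coupled price-impact system on `[0,1]`
with `A 0 ∈ (-1,0]` and `Σ 0 ≥ 0`, we have `B t < 0` and `B' t < 0` on `[0,1]`. -/
theorem stmt6 (κ B A Sg : ℝ → ℝ) (γ : ℝ) (hγ : 0 < γ) (Mb : ℕ) (hMb : 1 ≤ Mb)
    (hκ : ContinuousOn κ (Icc (0:ℝ) 1)) (hκpos : ∀ t ∈ Icc (0:ℝ) 1, 0 < κ t)
    (hB0 : (Mb : ℝ) * B 0 + 1 < 0)
    (hA0 : A 0 ∈ Ioc (-1 : ℝ) 0) (hSg0 : 0 ≤ Sg 0)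
    (hB : ∀ t ∈ Icc (0:ℝ) 1,
      HasDerivAt B (2 * κ t * ((Mb : ℝ) * B t + 1) / (γ * (A t + (Mb : ℝ) + 1))) t)
    (hA : ∀ t ∈ Icc (0:ℝ) 1,
      HasDerivAt A (-(deriv B t) ^ 2 * Sg t * (A t + 1)) t)
    (hSg : ∀ t ∈ Icc (0:ℝ) 1,
      HasDerivAt Sg (-(deriv B t) ^ 2 * (Sg t) ^ 2) t) :
    ∀ t ∈ Icc (0:ℝ) 1, B t < 0 ∧ deriv B t < 0 :=
  stmt6_general κ B A Sg γ hγ Mb hκ hκpos hB0 hA0 hB hA hSg
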